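/- Let X ∈ L_n be a fixed point of T that is not a vertex of L_n. Then for every ε > 0 there exists Y ∈ L_n with ‖Y − X‖ < ε (Frobenius norm) and Y·Y > X·X. -/

import Mathlib

def elliptope (n : ℕ) : Set (Matrix (Fin n) (Fin n) ℝ) :=
  {X | X.PosSemidef ∧ ∀ i, X i i = 1}

def frob {n : ℕ} (A B : Matrix (Fin n) (Fin n) ℝ) : ℝ :=
  ∑ i, ∑ j, A i j * B i j

/-!
Write `X` as the Gram matrix of unit vectors `v i` and let `T` be the frame operator
`x ↦ ∑ j ≠ p, ⟪v j, x⟫ • v j` of all vectors but `v p`. If `Y` is the Gram matrix after moving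
`v p` alone to a unit vector `w`, then `Y · Y - X · X = 2 (⟪w, T w⟫ - ⟪v p, T (v p)⟫)` and
`X · Y - X · X = 2 ⟪w - v p, T (v p)⟫`. So maximality of `X · X` among the `X · Y` makes `v p`
maximise `⟪·, T (v p)⟫` on the unit sphere, i.e. `v p` is an eigenvector of `T`, with eigenvalue
`μ = L p - 1` where `L i = ∑ j, X i j ^ 2`. If `X` is not a vertex then `X p q ^ 2 < 1` for some
`p, q`, and choosing `L p ≤ L q` gives `⟪v q, T (v q)⟫ = L q - X p q ^ 2 > μ`. An eigenvector of a
symmetric operator whose quadratic form is not maximal on the sphere is a limit of unit vectors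
`w` with `⟪w, T w⟫ > μ` (perturb along `v q` and renormalise), and their Gram matrices are the `Y`.
-/

open Matrix Finset Topology
open scoped RealInnerProductSpace

theorem Finset.sum_sum_eq_two_mul_sum_erase {ι R : Type*} [Fintype ι] [DecidableEq ι]
    [CommRing R] {F : ι → ι → R} (p : ι) (hF : ∀ i j, F i j = F j i)
    (h0 : ∀ i j, i ≠ p → j ≠ p → F i j = 0) (hpp : F p p = 0) :
    ∑ i, ∑ j, F i j = 2 * ∑ j ∈ univ.erase p, F p j := by
  have hrow : ∀ i ∈ univ.erase p, ∑ j, F i j = F p i := fun i hi => by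
    rw [sum_eq_single p (fun j _ hj => h0 i j (ne_of_mem_erase hi) hj) (by simp), hF]
  rw [← add_sum_erase _ _ (mem_univ p), sum_congr rfl hrow, ← add_sum_erase _ _ (mem_univ p),
    hpp]
  ring

theorem norm_update_eq_one {ι F : Type*} [DecidableEq ι] [Norm F] {v : ι → F} {p : ι} {w : F}
    (hv : ∀ i, ‖v i‖ = 1) (hw : ‖w‖ = 1) (i : ι) : ‖Function.update v p w i‖ = 1 := by
  rcases eq_or_ne i p with rfl | h
  · simpa
  · simpa [h] using hv i

theorem Matrix.PosSemidef.exists_gram_eq {ι : Type*} [Fintype ι] {X : Matrix ι ι ℝ}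
    (hX : X.PosSemidef) : ∃ v : ι → EuclideanSpace ℝ ι, gram ℝ v = X := by
  classical
  open scoped MatrixOrder in
  obtain ⟨B, rfl⟩ := CStarAlgebra.nonneg_iff_eq_star_mul_self.mp hX.nonneg
  refine ⟨fun j => WithLp.toLp 2 fun i => B i j, ?_⟩
  rw [gram_eq_conjTranspose_mul (EuclideanSpace.basisFun ι ℝ)]
  rfl

variable {E : Type*} [NormedAddCommGroup E] [InnerProductSpace ℝ E]

theorem eq_inner_smul_of_forall_inner_le {u c : E} (hu : ‖u‖ = 1)
    (h : ∀ w : E, ‖w‖ = 1 → ⟪w, c⟫ ≤ ⟪u, c⟫) : c = ⟪u, c⟫ • u := by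
  rcases eq_or_ne c 0 with rfl | hc
  · simp
  have hcu : ‖c‖ ≤ ⟪u, c⟫ := by
    have := h (‖c‖⁻¹ • c) (norm_smul_inv_norm hc)
    rwa [real_inner_smul_left, real_inner_self_eq_norm_sq, sq, ← mul_assoc,
      inv_mul_cancel₀ (norm_ne_zero_iff.mpr hc), one_mul] at this
  have heq : ⟪u, c⟫ = ‖u‖ * ‖c‖ := le_antisymm (real_inner_le_norm u c) (by rwa [hu, one_mul])
  have hcu' := inner_eq_norm_mul_iff_real.mp heq
  rw [hu, one_smul] at hcu'
  rw [heq, hu, one_mul, hcu']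

theorem exists_sign_of_forall_one_le_sq_inner {ι : Type*} {v : ι → E} (hv : ∀ i, ‖v i‖ = 1)
    (h : ∀ i j, 1 ≤ ⟪v i, v j⟫ ^ 2) :
    ∃ s : ι → ℝ, (∀ i, s i = 1 ∨ s i = -1) ∧ ∀ i j, ⟪v i, v j⟫ = s i * s j := by
  cases isEmpty_or_nonempty ι with
  | inl _ => exact ⟨fun _ => 1, by simp, isEmptyElim⟩
  | inr hne =>
    obtain ⟨i₀⟩ := hne
    have hsq : ∀ i, ⟪v i₀, v i⟫ ^ 2 = 1 := fun i => by
      refine le_antisymm ?_ (h i₀ i)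
      have := abs_real_inner_le_norm (v i₀) (v i)
      rw [hv, hv, one_mul] at this
      nlinarith [abs_nonneg ⟪v i₀, v i⟫, sq_abs ⟪v i₀, v i⟫]
    have hvi : ∀ i, v i = ⟪v i₀, v i⟫ • v i₀ := fun i => by
      rw [← sub_eq_zero, ← norm_eq_zero, ← sq_eq_zero_iff, norm_sub_sq_real, real_inner_smul_right,
        norm_smul, hv, hv, Real.norm_eq_abs, mul_one, sq_abs, real_inner_comm (v i₀)]
      linear_combination -hsq i
    refine ⟨fun i => ⟪v i₀, v i⟫, fun i => sq_eq_one_iff.mp (hsq i), fun i j => ?_⟩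
    rw [hvi i, hvi j, real_inner_smul_left, real_inner_smul_right, real_inner_self_eq_norm_sq,
      hv]
    ring

namespace LinearMap.IsSymmetric

variable {T : E →ₗ[ℝ] E} {v : E} {μ : ℝ}

theorem inner_add_smul_map_add_smul_sub (hT : T.IsSymmetric) (hTv : T v = μ • v) (x : E)
    (t : ℝ) :
    ⟪v + t • x, T (v + t • x)⟫ - μ * ‖v + t • x‖ ^ 2 = t ^ 2 * (⟪x, T x⟫ - μ * ‖x‖ ^ 2) := by
  have hvx : ⟪v, T x⟫ = μ * ⟪v, x⟫ := by rw [← hT, hTv, real_inner_smul_left]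
  simp only [map_add, map_smul, hTv, inner_add_left, inner_add_right, real_inner_smul_left,
    real_inner_smul_right, hvx, ← real_inner_self_eq_norm_sq, real_inner_comm x v]
  ring

theorem mem_closure_setOf_lt_inner_map (hT : T.IsSymmetric) (hTv : T v = μ • v) (hv : ‖v‖ = 1)
    {x : E} (hx : μ * ‖x‖ ^ 2 < ⟪x, T x⟫) :
    v ∈ closure {w : E | ‖w‖ = 1 ∧ μ < ⟪w, T w⟫} := by
  set y : ℝ → E := fun t => v + t • x
  have hy : ∀ t ≠ (0 : ℝ), μ * ‖y t‖ ^ 2 < ⟪y t, T (y t)⟫ := fun t ht => by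
    have := hT.inner_add_smul_map_add_smul_sub hTv x t
    nlinarith [pow_pos (sq_pos_of_ne_zero ht) 1]
  refine mem_closure_of_tendsto (f := fun t => ‖y t‖⁻¹ • y t) (b := 𝓝[≠] (0 : ℝ)) ?_
    (eventually_nhdsWithin_of_forall fun t ht => ?_)
  · have hy0 : ‖y 0‖ ≠ 0 := by simp [y, hv]
    have : ContinuousAt (fun t => ‖y t‖⁻¹ • y t) 0 := by fun_prop (disch := exact hy0)
    simpa [y, hv] using this.tendsto.mono_left nhdsWithin_le_nhds
  · have hyt := hy t ht
    have hne : y t ≠ 0 := fun h => by simp [h] at hyt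
    refine ⟨norm_smul_inv_norm hne, ?_⟩
    rw [map_smul, real_inner_smul_left, real_inner_smul_right, ← mul_assoc, ← sq, inv_pow,
      lt_inv_mul_iff₀ (pow_pos (norm_pos_iff.mpr hne) 2), mul_comm]
    exact hyt

end LinearMap.IsSymmetric

noncomputable def frameOperator {ι : Type*} (s : Finset ι) (v : ι → E) : E →L[ℝ] E :=
  ∑ j ∈ s, InnerProductSpace.rankOne ℝ (v j) (v j)

section frameOperator

variable {ι : Type*} (s : Finset ι) (v : ι → E)

theorem inner_frameOperator (x y : E) :
    ⟪x, frameOperator s v y⟫ = ∑ j ∈ s, ⟪v j, x⟫ * ⟪v j, y⟫ := by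
  simp [frameOperator, inner_sum, real_inner_smul_right, real_inner_comm, mul_comm]

theorem isSymmetric_frameOperator : (frameOperator s v : E →ₗ[ℝ] E).IsSymmetric :=
  (ContinuousLinearMap.isPositive_sum s fun j _ =>
    InnerProductSpace.isPositive_rankOne_self (v j)).isSymmetric

end frameOperator

section gramUpdate

variable {ι : Type*} [DecidableEq ι] {v : ι → E} {p : ι} {w : E}

theorem sum_sum_gram_update [Fintype ι] (f : ℝ → ℝ → ℝ) (hf : ∀ a, f a a = 0) (hw : ‖w‖ = ‖v p‖) :
    ∑ i, ∑ j, f (gram ℝ v i j) (gram ℝ (Function.update v p w) i j)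
      = 2 * ∑ j ∈ univ.erase p, f ⟪v p, v j⟫ ⟪w, v j⟫ := by
  rw [sum_sum_eq_two_mul_sum_erase p]
  · refine congrArg _ (sum_congr rfl fun j hj => ?_)
    simp [Function.update_of_ne (ne_of_mem_erase hj)]
  · intro i j
    simp only [gram_apply, real_inner_comm (v i), real_inner_comm (Function.update v p w i)]
  · intro i j hi hj
    simp [Function.update_of_ne hi, Function.update_of_ne hj, hf]
  · simp [hw, hf]

theorem continuous_gram_update : Continuous fun w : E => gram ℝ (Function.update v p w) :=
  continuous_pi fun i => continuous_pi fun j => by simp only [gram_apply]; fun_prop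

end gramUpdate

section elliptope

variable {n : ℕ} {v : Fin n → E}

theorem gram_mem_elliptope (hv : ∀ i, ‖v i‖ = 1) : gram ℝ v ∈ elliptope n :=
  ⟨posSemidef_gram ℝ v, fun i => by simp [hv]⟩

theorem exists_gram_eq_of_mem_elliptope {X : Matrix (Fin n) (Fin n) ℝ} (hX : X ∈ elliptope n) :
    ∃ v : Fin n → EuclideanSpace ℝ (Fin n), (∀ i, ‖v i‖ = 1) ∧ gram ℝ v = X := by
  obtain ⟨v, rfl⟩ := hX.1.exists_gram_eq
  refine ⟨v, fun i => (pow_eq_one_iff_of_nonneg (norm_nonneg _) two_ne_zero).mp ?_, rfl⟩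
  rw [← real_inner_self_eq_norm_sq]
  exact hX.2 i

variable {p : Fin n} {w : E}

theorem frob_gram_update_sub (hw : ‖w‖ = ‖v p‖) :
    frob (gram ℝ v) (gram ℝ (Function.update v p w)) - frob (gram ℝ v) (gram ℝ v)
      = 2 * ⟪w - v p, frameOperator (univ.erase p) v (v p)⟫ := by
  have := sum_sum_gram_update (fun a b => a * (b - a)) (fun _ => by ring) hw
  simp only [frob, ← sum_sub_distrib, ← mul_sub]
  rw [this, inner_frameOperator]
  congr 1
  refine sum_congr rfl fun j _ => ?_
  rw [inner_sub_right, real_inner_comm (v j) w, real_inner_comm (v j)]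
  ring

theorem frob_gram_update_self_sub (hw : ‖w‖ = ‖v p‖) :
    frob (gram ℝ (Function.update v p w)) (gram ℝ (Function.update v p w))
        - frob (gram ℝ v) (gram ℝ v)
      = 2 * (⟪w, frameOperator (univ.erase p) v w⟫
        - ⟪v p, frameOperator (univ.erase p) v (v p)⟫) := by
  have := sum_sum_gram_update (fun a b => b * b - a * a) (fun _ => by ring) hw
  simp only [frob, ← sum_sub_distrib]
  rw [this, inner_frameOperator, inner_frameOperator, ← sum_sub_distrib]
  congr 1
  refine sum_congr rfl fun j _ => ?_
  rw [real_inner_comm (v j) w, real_inner_comm (v j)]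

theorem frameOperator_erase_apply_self_eq_smul (hv : ∀ i, ‖v i‖ = 1)
    (hfix : ∀ Y ∈ elliptope n, frob (gram ℝ v) Y ≤ frob (gram ℝ v) (gram ℝ v)) (p : Fin n) :
    frameOperator (univ.erase p) v (v p)
      = ⟪v p, frameOperator (univ.erase p) v (v p)⟫ • v p := by
  refine eq_inner_smul_of_forall_inner_le (hv p) fun w hw => ?_
  have hY := hfix _ (gram_mem_elliptope (norm_update_eq_one (p := p) hv hw))
  have := frob_gram_update_sub (v := v) (p := p) (hw.trans (hv p).symm)
  rw [inner_sub_left] at this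
  linarith

theorem exists_near_frob_gt (hv : ∀ i, ‖v i‖ = 1)
    (hfix : ∀ Y ∈ elliptope n, frob (gram ℝ v) Y ≤ frob (gram ℝ v) (gram ℝ v)) {q : Fin n}
    (hpq : ⟪v p, v q⟫ ^ 2 < 1) (hL : ∑ j, ⟪v j, v p⟫ ^ 2 ≤ ∑ j, ⟪v j, v q⟫ ^ 2)
    {ε : ℝ} (hε : 0 < ε) :
    ∃ Y ∈ elliptope n, √(frob (Y - gram ℝ v) (Y - gram ℝ v)) < ε ∧
      frob (gram ℝ v) (gram ℝ v) < frob Y Y := by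
  set T := frameOperator (univ.erase p) v
  have hquad : ∀ x, ⟪x, T x⟫ = ∑ j, ⟪v j, x⟫ ^ 2 - ⟪v p, x⟫ ^ 2 := fun x => by
    simp only [T, inner_frameOperator, sum_erase_eq_sub (mem_univ p), sq]
  have hgrow : ⟪v p, T (v p)⟫ * ‖v q‖ ^ 2 < ⟪v q, T (v q)⟫ := by
    rw [hquad, hquad, hv, real_inner_self_eq_norm_sq, hv]
    linarith
  have hcl := (isSymmetric_frameOperator _ v).mem_closure_setOf_lt_inner_map
    (frameOperator_erase_apply_self_eq_smul hv hfix p) (hv p) hgrow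
  set Y : E → Matrix (Fin n) (Fin n) ℝ := fun w => gram ℝ (Function.update v p w)
  have hdist : Continuous fun w => √(frob (Y w - gram ℝ v) (Y w - gram ℝ v)) := by
    have := continuous_gram_update (v := v) (p := p)
    unfold frob
    fun_prop
  have hdist₀ : √(frob (Y (v p) - gram ℝ v) (Y (v p) - gram ℝ v)) < ε := by simpa [Y, frob]
  obtain ⟨w, hwε, hw, hwT⟩ :=
    ((hdist.continuousAt.eventually_lt continuousAt_const hdist₀).and_frequently
      (mem_closure_iff_frequently.mp hcl)).exists
  refine ⟨_, gram_mem_elliptope (norm_update_eq_one hv hw), hwε, ?_⟩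
  have := frob_gram_update_self_sub (v := v) (p := p) (hw.trans (hv p).symm)
  rw [ContinuousLinearMap.coe_coe] at hwT
  linarith

end elliptope

theorem stmt17 {n : ℕ} (X : Matrix (Fin n) (Fin n) ℝ) (hX : X ∈ elliptope n)
    (hfix : ∀ Y ∈ elliptope n, frob X Y ≤ frob X X)
    (hnotvertex : ¬∃ v : Fin n → ℝ, (∀ i, v i = 1 ∨ v i = -1) ∧ ∀ i j, X i j = v i * v j) :
    ∀ ε > (0 : ℝ), ∃ Y ∈ elliptope n,
      Real.sqrt (frob (Y - X) (Y - X)) < ε ∧ frob X X < frob Y Y := by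
  intro ε hε
  obtain ⟨v, hv, rfl⟩ := exists_gram_eq_of_mem_elliptope hX
  obtain ⟨p, q, hpq⟩ : ∃ p q, ⟪v p, v q⟫ ^ 2 < 1 := by
    by_contra! h
    exact hnotvertex (exists_sign_of_forall_one_le_sq_inner hv h)
  rcases le_total (∑ j, ⟪v j, v p⟫ ^ 2) (∑ j, ⟪v j, v q⟫ ^ 2) with hL | hL
  · exact exists_near_frob_gt hv hfix hpq hL hε
  · exact exists_near_frob_gt hv hfix (by rwa [real_inner_comm]) hL hε
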